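/- arXiv:1109.6700 — 6 statements merged into one kernel-verified Lean document; each statement's English description precedes it below -/
import Mathlib

section
/- The poset algebra A_𝒫 has local units: for any finite family P_1, …, P_n of basis elements, the element u = Σ_{x ∈ S} {x}, where S = {0_{P_1}, …, 0_{P_n}}, satisfies u * a = a for every a in the span of P_1, …, P_n, and the element v = Σ_{y ∈ T} {y}, where T = {1_{P_1}, …, 1_{P_n}}, satisfies a * v = a for every such a. Consequently the product of A_𝒫 is non-degenerate. -/
variable (L : Type*) [PartialOrder L]

/-- A finite subposet of `L` possessing a greatest and a least element. -/
structure SubPoset where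
  carrier : Finset L
  top : L
  bot : L
  top_mem : top ∈ carrier
  bot_mem : bot ∈ carrier
  le_top : ∀ x ∈ carrier, x ≤ top
  bot_le : ∀ x ∈ carrier, bot ≤ x

variable {L} [DecidableEq L]

/-- The union `P ∪ Q`, when `1_P = 0_Q`, as an element of `𝒫`. -/
def SubPoset.union (P Q : SubPoset L) (h : P.top = Q.bot) : SubPoset L where
  carrier := P.carrier ∪ Q.carrier
  top := Q.top
  bot := P.bot
  top_mem := Finset.mem_union_right _ Q.top_mem
  bot_mem := Finset.mem_union_left _ P.bot_mem
  le_top := fun x hx => by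
    rcases Finset.mem_union.mp hx with h1 | h1
    · exact le_trans (P.le_top x h1) (h ▸ Q.bot_le Q.top Q.top_mem)
    · exact Q.le_top x h1
  bot_le := fun x hx => by
    rcases Finset.mem_union.mp hx with h1 | h1
    · exact P.bot_le x h1
    · exact le_trans (h ▸ P.bot_le P.top P.top_mem) (Q.bot_le x h1)

variable (k : Type*) [Field k]

/-- Product of two basis elements of the poset algebra `A_𝒫`. -/
noncomputable def mulBasis (P Q : SubPoset L) : SubPoset L →₀ k :=
  if h : P.top = Q.bot then Finsupp.single (P.union Q h) 1 else 0

/-- The bilinear product of the poset algebra `A_𝒫`. -/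
noncomputable def mulA (f g : SubPoset L →₀ k) : SubPoset L →₀ k :=
  f.sum fun P a => g.sum fun Q b => (a * b) • mulBasis k P Q

/-- The one-element subposet `{x}`. -/
def singl (x : L) : SubPoset L :=
  ⟨{x}, x, x, Finset.mem_singleton_self x, Finset.mem_singleton_self x,
    fun y hy => le_of_eq (Finset.mem_singleton.mp hy),
    fun y hy => ge_of_eq (Finset.mem_singleton.mp hy)⟩

/-
The one-point subposets `{x}` act on the basis as projections: `{x} * P = P` if `x = 0_P` and `0`
otherwise, and symmetrically `P * {y} = P` if `1_P = y`. Summing `{x}` over a finite set `S`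
containing the minima of the `P_i` thus gives a left identity on their span, by bilinearity;
dually for the maxima. Non-degeneracy follows: every `f` lies in the span of its support, so
`f = f * v` for a suitable `v`, and `f * v = 0` whenever `f` annihilates everything.
-/

open Finsupp

namespace SubPoset

lemma singl_union (P : SubPoset L) : (singl P.bot).union P rfl = P := by
  cases P
  simpa [SubPoset.union, singl]

lemma union_singl (P : SubPoset L) : P.union (singl P.top) rfl = P := by
  cases P
  simpa [SubPoset.union, singl]

end SubPoset

lemma mulA_add_left (f f' g : SubPoset L →₀ k) :
    mulA k (f + f') g = mulA k f g + mulA k f' g :=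
  sum_add_index' (fun _ => by simp) fun _ _ _ => by
    simp only [add_mul, add_smul, sum_add]

lemma mulA_smul_left (c : k) (f g : SubPoset L →₀ k) :
    mulA k (c • f) g = c • mulA k f g := by
  rw [mulA, mulA, sum_smul_index (by simp), smul_sum]
  simp only [smul_sum, smul_smul, mul_assoc]

lemma mulA_add_right (f g g' : SubPoset L →₀ k) :
    mulA k f (g + g') = mulA k f g + mulA k f g' := by
  rw [mulA, mulA, mulA, ← sum_add]
  exact sum_congr fun _ _ => sum_add_index' (fun _ => by simp) fun _ _ _ => by
    rw [mul_add, add_smul]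

lemma mulA_smul_right (c : k) (f g : SubPoset L →₀ k) :
    mulA k f (c • g) = c • mulA k f g := by
  rw [mulA, mulA, smul_sum]
  refine sum_congr fun _ _ => ?_
  rw [sum_smul_index (by simp), smul_sum]
  simp only [smul_smul, mul_left_comm]

noncomputable def mulBilin : (SubPoset L →₀ k) →ₗ[k] (SubPoset L →₀ k) →ₗ[k] SubPoset L →₀ k :=
  LinearMap.mk₂ k (mulA k) (mulA_add_left k) (mulA_smul_left k) (mulA_add_right k)
    (mulA_smul_right k)

lemma mulBilin_apply (f g : SubPoset L →₀ k) : mulBilin k f g = mulA k f g :=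
  rfl

lemma mulA_single_single (P Q : SubPoset L) :
    mulA k (single P 1) (single Q 1) = mulBasis k P Q := by
  rw [mulA, sum_single_index (by simp), sum_single_index (by simp), one_mul, one_smul]

lemma mulA_singl_left (x : L) (P : SubPoset L) :
    mulA k (single (singl x) 1) (single P 1) = if x = P.bot then single P 1 else 0 := by
  rw [mulA_single_single, mulBasis]
  by_cases h : x = P.bot
  · subst h
    exact (dif_pos rfl).trans (by rw [SubPoset.singl_union, if_pos rfl])
  · exact (dif_neg h).trans (if_neg h).symm

lemma mulA_singl_right (P : SubPoset L) (y : L) :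
    mulA k (single P 1) (single (singl y) 1) = if P.top = y then single P 1 else 0 := by
  rw [mulA_single_single, mulBasis]
  by_cases h : P.top = y
  · subst h
    exact (dif_pos rfl).trans (by rw [SubPoset.union_singl, if_pos rfl])
  · exact (dif_neg h).trans (if_neg h).symm

noncomputable def localUnit (S : Finset L) : SubPoset L →₀ k :=
  ∑ x ∈ S, single (singl x) 1

lemma mulA_localUnit_left_single {S : Finset L} {P : SubPoset L} (hP : P.bot ∈ S) :
    mulA k (localUnit k S) (single P 1) = single P 1 := by
  rw [← mulBilin_apply, localUnit, map_sum, LinearMap.sum_apply]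
  simp only [mulBilin_apply, mulA_singl_left, Finset.sum_ite_eq', if_pos hP]

lemma mulA_localUnit_right_single {S : Finset L} {P : SubPoset L} (hP : P.top ∈ S) :
    mulA k (single P 1) (localUnit k S) = single P 1 := by
  rw [← mulBilin_apply, localUnit, map_sum]
  simp only [mulBilin_apply, mulA_singl_right, Finset.sum_ite_eq, if_pos hP]

lemma mulA_localUnit_left {S : Finset L} {s : Set (SubPoset L)}
    (hs : ∀ P ∈ s, P.bot ∈ S) {a : SubPoset L →₀ k} (ha : a ∈ supported k k s) :
    mulA k (localUnit k S) a = a := by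
  rw [supported_eq_span_single] at ha
  refine LinearMap.eqOn_span (f := mulBilin k (localUnit k S)) (g := LinearMap.id) ?_ ha
  rintro _ ⟨P, hP, rfl⟩
  exact mulA_localUnit_left_single k (hs P hP)

lemma mulA_localUnit_right {S : Finset L} {s : Set (SubPoset L)}
    (hs : ∀ P ∈ s, P.top ∈ S) {a : SubPoset L →₀ k} (ha : a ∈ supported k k s) :
    mulA k a (localUnit k S) = a := by
  rw [supported_eq_span_single] at ha
  refine LinearMap.eqOn_span (f := (mulBilin k).flip (localUnit k S)) (g := LinearMap.id) ?_ ha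
  rintro _ ⟨P, hP, rfl⟩
  exact mulA_localUnit_right_single k (hs P hP)

/-- `A_𝒫` has local units, and consequently its product is non-degenerate. -/
theorem posetAlgebra_local_units_and_nondegenerate :
    (∀ (n : ℕ) (P : Fin n → SubPoset L) (a : SubPoset L →₀ k),
      a ∈ Submodule.span k (Set.range fun i => Finsupp.single (P i) (1 : k)) →
      mulA k (∑ x ∈ Finset.image (fun i => (P i).bot) Finset.univ,
          Finsupp.single (singl x) (1 : k)) a = a ∧
      mulA k a (∑ y ∈ Finset.image (fun i => (P i).top) Finset.univ,
          Finsupp.single (singl y) (1 : k)) = a) ∧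
    (∀ f : SubPoset L →₀ k, (∀ g : SubPoset L →₀ k, mulA k f g = 0) → f = 0) ∧
    (∀ g : SubPoset L →₀ k, (∀ f : SubPoset L →₀ k, mulA k f g = 0) → g = 0) := by
  refine ⟨fun n P a ha => ?_, fun f hf => ?_, fun g hg => ?_⟩
  · rw [Set.range_comp' (fun Q => single Q (1 : k)) P, ← supported_eq_span_single] at ha
    refine ⟨mulA_localUnit_left k ?_ ha, mulA_localUnit_right k ?_ ha⟩
    all_goals
      rintro _ ⟨i, rfl⟩
      exact Finset.mem_image_of_mem _ (Finset.mem_univ i)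
  · rw [← mulA_localUnit_right k (S := f.support.image SubPoset.top)
      (fun P hP => Finset.mem_image_of_mem _ hP) (mem_supported_support k f)]
    exact hf _
  · rw [← mulA_localUnit_left k (S := g.support.image SubPoset.bot)
      (fun P hP => Finset.mem_image_of_mem _ hP) (mem_supported_support k g)]
    exact hg _
end

section
/- For the poset algebra A_𝒫 with coproduct Δ(P) = Σ_{x ∈ P, x ≠ 1_P} (−∞, x]_P ⊗ [x, +∞)_P (extended as a multiplier), Δ is a derivation: Δ(P*Q) = Δ(P)(1 ⊗ Q) + (P ⊗ 1)Δ(Q) for all basis elements P, Q. -/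
variable (L : Type*) [PartialOrder L]

variable {L} [DecidableEq L]

variable (k : Type*) [Field k]

open scoped TensorProduct

variable [DecidableRel (α := L) (· ≤ ·)]

/-- The down-interval `(−∞, x]_P`, for `x ∈ P`. -/
def down (P : SubPoset L) (x : L) (hx : x ∈ P.carrier) : SubPoset L :=
  ⟨P.carrier.filter (· ≤ x), x, P.bot,
    Finset.mem_filter.mpr ⟨hx, le_refl x⟩,
    Finset.mem_filter.mpr ⟨P.bot_mem, P.bot_le x hx⟩,
    fun y hy => (Finset.mem_filter.mp hy).2,
    fun y hy => P.bot_le y (Finset.mem_filter.mp hy).1⟩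

/-- The up-interval `[x, +∞)_P`, for `x ∈ P`. -/
def up (P : SubPoset L) (x : L) (hx : x ∈ P.carrier) : SubPoset L :=
  ⟨P.carrier.filter (x ≤ ·), P.top, x,
    Finset.mem_filter.mpr ⟨P.top_mem, P.le_top x hx⟩,
    Finset.mem_filter.mpr ⟨hx, le_refl x⟩,
    fun y hy => P.le_top y (Finset.mem_filter.mp hy).1,
    fun y hy => (Finset.mem_filter.mp hy).2⟩

/-- `P₀ = P \ {1_P}`. -/
def P₀ (P : SubPoset L) : Finset L := P.carrier.filter (· ≠ P.top)

/-- The coproduct on a basis element: `Δ(P) = Σ_{x ∈ P₀} (−∞,x]_P ⊗ [x,+∞)_P`. -/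
noncomputable def ΔB (P : SubPoset L) :
    (SubPoset L →₀ k) ⊗[k] (SubPoset L →₀ k) :=
  ∑ x ∈ (P₀ P).attach,
    Finsupp.single (down P x.1 (Finset.mem_of_mem_filter _ x.2)) (1 : k) ⊗ₜ[k]
      Finsupp.single (up P x.1 (Finset.mem_of_mem_filter _ x.2)) (1 : k)

/-- The zero element of `A_𝒫 ⊗ A_𝒫` (given explicitly to help instance resolution). -/
noncomputable def tensorZero : (SubPoset L →₀ k) ⊗[k] (SubPoset L →₀ k) :=
  (AddMonoid.toZero (M := (SubPoset L →₀ k) ⊗[k] (SubPoset L →₀ k))).zero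

/-! If `1_P = 0_Q` then `P ∩ Q = {1_P}`, so `(P ∪ Q)₀` is the disjoint union of `P₀` and `Q₀`.
For `x ∈ P` the intervals of `P ∪ Q` at `x` are `(−∞,x]_P` and `[x,+∞)_P ∪ Q`, and for `x ∈ Q`
they are `P ∪ (−∞,x]_Q` and `[x,+∞)_Q`; so the terms of `Δ(P ∪ Q)` indexed by `P₀` and by `Q₀`
are those of `Δ(P)(1 ⊗ Q)` and of `(P ⊗ 1)Δ(Q)`. If `1_P ≠ 0_Q`, every product
`[x,+∞)_P * Q` and `P * (−∞,x]_Q` vanishes, because `[x,+∞)_P` ends at `1_P` and `(−∞,x]_Q`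
starts at `0_Q`. -/

omit [DecidableEq L] [DecidableRel (α := L) (· ≤ ·)] in
theorem SubPoset.ext {P Q : SubPoset L} (hc : P.carrier = Q.carrier)
    (ht : P.top = Q.top) (hb : P.bot = Q.bot) : P = Q := by
  cases P; cases Q
  simp only at hc ht hb
  subst hc ht hb
  rfl

omit [DecidableEq L] [DecidableRel (α := L) (· ≤ ·)] in
theorem eq_top_of_mem_of_mem {P Q : SubPoset L} (h : P.top = Q.bot) {y : L}
    (hyP : y ∈ P.carrier) (hyQ : y ∈ Q.carrier) : y = P.top :=
  le_antisymm (P.le_top y hyP) (h ▸ Q.bot_le y hyQ)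

section

omit [DecidableRel (α := L) (· ≤ ·)]

theorem mulBasis_of_eq {P Q : SubPoset L} (h : P.top = Q.bot) :
    mulBasis k P Q = Finsupp.single (P.union Q h) 1 :=
  dif_pos h

theorem mulBasis_of_ne {P Q : SubPoset L} (h : P.top ≠ Q.bot) : mulBasis k P Q = 0 :=
  dif_neg h

theorem mem_P₀ {P : SubPoset L} {y : L} : y ∈ P₀ P ↔ y ∈ P.carrier ∧ y ≠ P.top :=
  Finset.mem_filter

theorem sum_attach_P₀ {M : Type*} [AddCommMonoid M] (R : SubPoset L)
    (f : (x : L) → x ∈ R.carrier → M) :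
    ∑ x ∈ (P₀ R).attach, f x.1 (Finset.mem_of_mem_filter _ x.2) =
      ∑ x ∈ P₀ R, if hx : x ∈ R.carrier then f x hx else 0 :=
  (Finset.sum_dite_of_true (fun _ hx => Finset.mem_of_mem_filter _ hx) f _).symm

theorem P₀_union {P Q : SubPoset L} (h : P.top = Q.bot) :
    P₀ (P.union Q h) = P₀ P ∪ P₀ Q := by
  ext y
  have hPtop : y ∈ P.carrier → y ∉ Q.carrier → y ≠ P.top :=
    fun _ hyQ hy => hyQ (hy ▸ h ▸ Q.bot_mem)
  have hQtop : y ∈ P.carrier → y ≠ P.top → y ≠ Q.top :=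
    fun hyP hne hy => hne (eq_top_of_mem_of_mem h hyP (hy ▸ Q.top_mem))
  simp only [Finset.mem_union, mem_P₀, SubPoset.union]
  tauto

theorem disjoint_P₀ {P Q : SubPoset L} (h : P.top = Q.bot) : Disjoint (P₀ P) (P₀ Q) :=
  Finset.disjoint_left.mpr fun _ hyP hyQ =>
    (mem_P₀.mp hyP).2 (eq_top_of_mem_of_mem h (mem_P₀.mp hyP).1 (mem_P₀.mp hyQ).1)

end

section

omit [DecidableEq L]

theorem mem_down_carrier {P : SubPoset L} {x y : L} (hx : x ∈ P.carrier) :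
    y ∈ (down P x hx).carrier ↔ y ∈ P.carrier ∧ y ≤ x :=
  Finset.mem_filter

theorem mem_up_carrier {P : SubPoset L} {x y : L} (hx : x ∈ P.carrier) :
    y ∈ (up P x hx).carrier ↔ y ∈ P.carrier ∧ x ≤ y :=
  Finset.mem_filter

end

section Union

variable {P Q : SubPoset L} (h : P.top = Q.bot) {x : L} (hx' : x ∈ (P.union Q h).carrier)
include h

theorem down_union_of_mem_left (hx : x ∈ P.carrier) :
    down (P.union Q h) x hx' = down P x hx := by
  refine SubPoset.ext (Finset.ext fun y => ?_) rfl rfl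
  -- an element of `Q` below `x ≤ 1_P = 0_Q` is `1_P` itself
  have hQ : y ∈ Q.carrier → y ≤ x → y ∈ P.carrier := fun hyQ hyx =>
    le_antisymm (hyx.trans (P.le_top x hx)) (h ▸ Q.bot_le y hyQ) ▸ P.top_mem
  simp only [mem_down_carrier, SubPoset.union, Finset.mem_union]
  tauto

theorem up_union_of_mem_left (hx : x ∈ P.carrier) :
    up (P.union Q h) x hx' = (up P x hx).union Q h := by
  refine SubPoset.ext (Finset.ext fun y => ?_) rfl rfl
  have hQ : y ∈ Q.carrier → x ≤ y := fun hyQ => (P.le_top x hx).trans (h ▸ Q.bot_le y hyQ)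
  simp only [mem_up_carrier, SubPoset.union, Finset.mem_union]
  tauto

theorem down_union_of_mem_right (hx : x ∈ Q.carrier) :
    down (P.union Q h) x hx' = P.union (down Q x hx) h := by
  refine SubPoset.ext (Finset.ext fun y => ?_) rfl rfl
  have hP : y ∈ P.carrier → y ≤ x := fun hyP => (P.le_top y hyP).trans (h ▸ Q.bot_le x hx)
  simp only [mem_down_carrier, SubPoset.union, Finset.mem_union]
  tauto

theorem up_union_of_mem_right (hx : x ∈ Q.carrier) :
    up (P.union Q h) x hx' = up Q x hx := by
  refine SubPoset.ext (Finset.ext fun y => ?_) rfl rfl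
  -- an element of `P` above `0_Q = 1_P ≤ x` is `1_P = 0_Q` itself
  have hP : y ∈ P.carrier → x ≤ y → y ∈ Q.carrier := fun hyP hxy =>
    le_antisymm (P.le_top y hyP) ((h ▸ Q.bot_le x hx).trans hxy) ▸ h ▸ Q.bot_mem
  simp only [mem_up_carrier, SubPoset.union, Finset.mem_union]
  tauto

end Union

/-- `Δ` is a derivation, i.e. `Δ(P*Q) = Δ(P)(1 ⊗ Q) + (P ⊗ 1)Δ(Q)`:
if `1_P = 0_Q` then `Δ(P ∪ Q)` equals the sum of the two expanded sums, and otherwise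
both sides vanish. -/
theorem posetAlgebra_coproduct_derivation (P Q : SubPoset L) :
    (∀ h : P.top = Q.bot,
      ΔB k (P.union Q h) =
        (∑ x ∈ (P₀ P).attach,
          Finsupp.single (down P x.1 (Finset.mem_of_mem_filter _ x.2)) (1 : k) ⊗ₜ[k]
            mulBasis k (up P x.1 (Finset.mem_of_mem_filter _ x.2)) Q) +
        (∑ x ∈ (P₀ Q).attach,
          mulBasis k P (down Q x.1 (Finset.mem_of_mem_filter _ x.2)) ⊗ₜ[k]
            Finsupp.single (up Q x.1 (Finset.mem_of_mem_filter _ x.2)) (1 : k))) ∧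
    (P.top ≠ Q.bot →
      (∑ x ∈ (P₀ P).attach,
          Finsupp.single (down P x.1 (Finset.mem_of_mem_filter _ x.2)) (1 : k) ⊗ₜ[k]
            mulBasis k (up P x.1 (Finset.mem_of_mem_filter _ x.2)) Q) +
        (∑ x ∈ (P₀ Q).attach,
          mulBasis k P (down Q x.1 (Finset.mem_of_mem_filter _ x.2)) ⊗ₜ[k]
            Finsupp.single (up Q x.1 (Finset.mem_of_mem_filter _ x.2)) (1 : k)) =
        tensorZero k) := by
  refine ⟨fun h => ?_, fun h => ?_⟩
  · rw [ΔB, sum_attach_P₀ (P.union Q h) fun x hx =>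
        Finsupp.single (down _ x hx) (1 : k) ⊗ₜ[k] Finsupp.single (up _ x hx) (1 : k),
      sum_attach_P₀ P fun x hx =>
        Finsupp.single (down P x hx) (1 : k) ⊗ₜ[k] mulBasis k (up P x hx) Q,
      sum_attach_P₀ Q fun x hx =>
        mulBasis k P (down Q x hx) ⊗ₜ[k] Finsupp.single (up Q x hx) (1 : k),
      P₀_union h, Finset.sum_union (disjoint_P₀ h)]
    congr 1
    · refine Finset.sum_congr rfl fun x hx => ?_
      have hxP := (mem_P₀.mp hx).1
      have hxU : x ∈ (P.union Q h).carrier := Finset.mem_union_left _ hxP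
      rw [dif_pos hxU, dif_pos hxP, down_union_of_mem_left h hxU hxP,
        up_union_of_mem_left h hxU hxP, mulBasis_of_eq k (P := up P x hxP) h]
    · refine Finset.sum_congr rfl fun x hx => ?_
      have hxQ := (mem_P₀.mp hx).1
      have hxU : x ∈ (P.union Q h).carrier := Finset.mem_union_right _ hxQ
      rw [dif_pos hxU, dif_pos hxQ, down_union_of_mem_right h hxU hxQ,
        up_union_of_mem_right h hxU hxQ, mulBasis_of_eq k (Q := down Q x hxQ) h]
  · change _ = 0
    rw [Finset.sum_eq_zero fun x _ => ?_, Finset.sum_eq_zero fun x _ => ?_, add_zero]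
    · rw [mulBasis_of_ne k (Q := down Q x.1 _) h, TensorProduct.zero_tmul]
    · rw [mulBasis_of_ne k (P := up P x.1 _) h, TensorProduct.tmul_zero]
end

section
/- In the poset algebra A_𝒫, for basis elements P, S ∈ 𝒫, the multiplier Δ(P)(S ⊗ 1) lies in A_𝒫 ⊗ A_𝒫; explicitly, Δ(P)(S ⊗ 1) = ((−∞, 0_S]_P * S) ⊗ [0_S, +∞)_P if 0_S ∈ P_0, and equals 0 otherwise. -/
variable (L : Type*) [PartialOrder L]

variable {L} [DecidableEq L]

variable (k : Type*) [Field k]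

open scoped TensorProduct

variable [DecidableRel (α := L) (· ≤ ·)]

/-- for basis elements `P, S ∈ 𝒫`, the element `Δ(P)(S ⊗ 1)` of
`A_𝒫 ⊗ A_𝒫` equals `((−∞, 0_S]_P * S) ⊗ [0_S, +∞)_P` if `0_S ∈ P₀`, and `0` otherwise. -/
theorem posetAlgebra_coproduct_times_S_tensor_one (P S : SubPoset L) :
    (∑ x ∈ (P₀ P).attach,
        mulBasis k (down P x.1 (Finset.mem_of_mem_filter _ x.2)) S ⊗ₜ[k]
          Finsupp.single (up P x.1 (Finset.mem_of_mem_filter _ x.2)) (1 : k)) =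
      if h : S.bot ∈ P₀ P then
        mulBasis k (down P S.bot (Finset.mem_of_mem_filter _ h)) S ⊗ₜ[k]
          Finsupp.single (up P S.bot (Finset.mem_of_mem_filter _ h)) (1 : k)
      else tensorZero k := by
  split_ifs with h
  · refine Finset.sum_eq_single_of_mem (⟨S.bot, h⟩ : {x // x ∈ P₀ P}) (Finset.mem_attach _ _) ?_
    intro b _ hb
    have hne : (down P b.1 (Finset.mem_of_mem_filter _ b.2)).top ≠ S.bot := by
      intro heq
      exact hb (Subtype.ext heq)
    rw [mulBasis, dif_neg hne, TensorProduct.zero_tmul]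
  · refine (Finset.sum_eq_zero ?_).trans rfl
    intro b _
    have hne : (down P b.1 (Finset.mem_of_mem_filter _ b.2)).top ≠ S.bot := by
      intro heq
      exact h (heq ▸ b.2)
    rw [mulBasis, dif_neg hne, TensorProduct.zero_tmul]
end

section
/- Let F = ⟨a⟩ be the infinite cyclic group and kF its group algebra. The linear map Δ: kF → kF ⊗ kF defined by Δ(a^{n+1}) = Σ_{i=0}^{n} a^i ⊗ a^{n−i} for n ≥ 0, Δ(e) = 0, and Δ(a^{−n}) = −Σ_{i=1}^{n} a^{−(n+1−i)} ⊗ a^{−i} for n ≥ 1, is coassociative: (Δ ⊗ id)∘Δ = (id ⊗ Δ)∘Δ. -/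
open scoped TensorProduct

variable (k : Type*) [Field k]

/-- The group algebra of the infinite cyclic group, with basis `aⁿ = single n 1`, `n ∈ ℤ`. -/
abbrev GA := AddMonoidAlgebra k ℤ

/-- The value of the coproduct on the basis element `aⁿ`:
`Δ(aⁿ) = Σ_{i=0}^{n-1} aⁱ ⊗ a^{n-1-i}` for `n > 0`, `Δ(a⁰) = 0`, and
`Δ(a⁻ᵐ) = −Σ_{i=1}^{m} a^{−(m+1−i)} ⊗ a^{−i}` for `m ≥ 1`. -/
noncomputable def Dval (n : ℤ) : GA k ⊗[k] GA k :=
  if 0 < n then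
    ∑ i ∈ Finset.range n.toNat,
      AddMonoidAlgebra.single (i : ℤ) (1 : k) ⊗ₜ[k]
        AddMonoidAlgebra.single (n - 1 - (i : ℤ)) (1 : k)
  else if n < 0 then
    -∑ i ∈ Finset.range (-n).toNat,
      AddMonoidAlgebra.single (n + (i : ℤ)) (1 : k) ⊗ₜ[k]
        AddMonoidAlgebra.single (-(i : ℤ) - 1) (1 : k)
  else 0

/-- The coproduct `Δ : kF → kF ⊗ kF`, extended linearly from the basis. -/
noncomputable def Δ : GA k →ₗ[k] GA k ⊗[k] GA k :=
  Finsupp.lift (GA k ⊗[k] GA k) k ℤ (Dval k) ∘ₗ (AddMonoidAlgebra.coeffLinearEquiv k).toLinearMap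

/-!
`Δ(x)` is the quotient `(x ⊗ 1 - 1 ⊗ x) / (a ⊗ 1 - 1 ⊗ a)`; the proof only uses the resulting
twisted Leibniz rule `Δ(a x) = (a ⊗ 1) Δ(x) + 1 ⊗ x` together with `Δ(1) = 0`. For any such map,
both `(Δ ⊗ id) ∘ Δ` and `(id ⊗ Δ) ∘ Δ` send `a x` to `(a ⊗ 1 ⊗ 1) · (value at x) + 1 ⊗ Δ(x)`. As
`a ⊗ 1 ⊗ 1` is a unit, the two sides agree at `a x` iff they agree at `x`; they agree at `1`,
hence at every `aⁿ`, `n ∈ ℤ`.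
-/

open TensorProduct AddMonoidAlgebra

theorem AddMonoidAlgebra.isUnit_single_one {R G : Type*} [Semiring R] [AddGroup G] (g : G) :
    IsUnit (single g (1 : R)) :=
  ⟨⟨single g 1, single (-g) 1, by rw [single_mul_single, add_neg_cancel, one_mul, one_def],
    by rw [single_mul_single, neg_add_cancel, one_mul, one_def]⟩, rfl⟩

section TwistedDerivation

variable {R A : Type*} [CommRing R] [Ring A] [Algebra R A]

theorem map_id_mul_tmul_one (D : A →ₗ[R] A ⊗[R] A) (a : A) (t : A ⊗[R] A) :
    map LinearMap.id D ((a ⊗ₜ 1) * t) = (a ⊗ₜ[R] (1 : A ⊗[R] A)) * map LinearMap.id D t := by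
  induction t using TensorProduct.induction_on with
  | zero => simp only [mul_zero, map_zero]
  | tmul p q => simp [Algebra.TensorProduct.tmul_mul_tmul]
  | add s t hs ht => rw [mul_add, map_add, hs, ht, map_add, mul_add]

theorem assoc_mul_tmul_one_tmul (a : A) (s : A ⊗[R] A) (q : A) :
    TensorProduct.assoc R A A A (((a ⊗ₜ 1) * s) ⊗ₜ q) =
      (a ⊗ₜ[R] (1 : A ⊗[R] A)) * TensorProduct.assoc R A A A (s ⊗ₜ q) := by
  induction s using TensorProduct.induction_on with
  | zero => simp only [mul_zero, zero_tmul, map_zero]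
  | tmul p r => simp [Algebra.TensorProduct.tmul_mul_tmul]
  | add s t hs ht => rw [mul_add, add_tmul, map_add, hs, ht, add_tmul, map_add, mul_add]

theorem assoc_map_mul_tmul_one {D : A →ₗ[R] A ⊗[R] A} {a : A}
    (hD : ∀ x, D (a * x) = (a ⊗ₜ 1) * D x + 1 ⊗ₜ x) (t : A ⊗[R] A) :
    TensorProduct.assoc R A A A (map D LinearMap.id ((a ⊗ₜ 1) * t)) =
      (a ⊗ₜ[R] (1 : A ⊗[R] A)) * TensorProduct.assoc R A A A (map D LinearMap.id t) +
        1 ⊗ₜ t := by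
  induction t using TensorProduct.induction_on with
  | zero => simp only [mul_zero, map_zero, tmul_zero, add_zero]
  | tmul p q =>
    simp only [Algebra.TensorProduct.tmul_mul_tmul, one_mul, map_tmul, LinearMap.id_coe, id_eq,
      hD, add_tmul, map_add, assoc_mul_tmul_one_tmul, TensorProduct.assoc_tmul]
  | add s t hs ht =>
    rw [mul_add, map_add, map_add, hs, ht, map_add, map_add, mul_add, tmul_add]
    abel

theorem coassoc_apply_mul_iff {D : A →ₗ[R] A ⊗[R] A} {a : A} (ha : IsUnit a)
    (hD : ∀ x, D (a * x) = (a ⊗ₜ 1) * D x + 1 ⊗ₜ x) (hD₁ : D 1 = 0) (x : A) :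
    TensorProduct.assoc R A A A (map D LinearMap.id (D (a * x))) =
        map LinearMap.id D (D (a * x)) ↔
      TensorProduct.assoc R A A A (map D LinearMap.id (D x)) = map LinearMap.id D (D x) := by
  have hu : IsUnit (a ⊗ₜ[R] (1 : A ⊗[R] A)) :=
    ha.map (Algebra.TensorProduct.includeLeft (R := R) (S := R) (B := A ⊗[R] A))
  simp only [hD, map_add, assoc_map_mul_tmul_one hD, map_id_mul_tmul_one, map_tmul, hD₁,
    zero_tmul, add_zero, LinearMap.id_coe, id_eq, add_left_inj, hu.mul_right_inj]

end TwistedDerivation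

section

variable {k}

theorem Δ_single (n : ℤ) (c : k) : Δ k (single n c) = c • Dval k n :=
  Finsupp.sum_single_index (zero_smul _ _)

theorem Dval_zero : Dval k 0 = 0 := by simp [Dval]

theorem Δ_one : Δ k 1 = 0 := by rw [one_def, Δ_single, Dval_zero, smul_zero]

theorem Dval_natCast (m : ℕ) : Dval k m =
    ∑ i ∈ Finset.range m, single (i : ℤ) (1 : k) ⊗ₜ[k] single ((m : ℤ) - 1 - i) (1 : k) := by
  rcases Nat.eq_zero_or_pos m with rfl | hm
  · simp [Dval]
  · simp [Dval, hm]

theorem Dval_neg_natCast (m : ℕ) : Dval k (-m) =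
    -∑ i ∈ Finset.range m, single (-(m : ℤ) + i) (1 : k) ⊗ₜ[k] single (-(i : ℤ) - 1) (1 : k) := by
  rcases Nat.eq_zero_or_pos m with rfl | hm
  · simp [Dval]
  · simp [Dval, hm]

theorem single_one_tmul_one_mul_tmul (p q : ℤ) :
    (single 1 1 ⊗ₜ[k] 1 : GA k ⊗[k] GA k) * (single p 1 ⊗ₜ single q 1) =
      single (p + 1) 1 ⊗ₜ single q 1 := by
  rw [Algebra.TensorProduct.tmul_mul_tmul, single_mul_single, one_mul, one_mul, add_comm]

theorem Dval_natCast_add_one (m : ℕ) :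
    Dval k (m + 1) = (single 1 1 ⊗ₜ 1) * Dval k m + 1 ⊗ₜ[k] (single (m : ℤ) 1 : GA k) := by
  rw [← Nat.cast_succ, Dval_natCast, Dval_natCast, Finset.sum_range_succ', Finset.mul_sum]
  simp only [single_one_tmul_one_mul_tmul]
  rw [one_def]
  push_cast
  congr 1
  · refine Finset.sum_congr rfl fun i _ => ?_
    ring_nf
  · ring_nf

theorem Dval_neg_natCast_add_one (m : ℕ) :
    Dval k (-m) =
      (single 1 1 ⊗ₜ 1) * Dval k (-(m + 1)) + 1 ⊗ₜ[k] (single (-(m + 1 : ℤ)) 1 : GA k) := by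
  have key : (single 1 1 ⊗ₜ[k] 1 : GA k ⊗[k] GA k) *
      ∑ i ∈ Finset.range (m + 1), single (-((m + 1 : ℕ) : ℤ) + i) 1 ⊗ₜ single (-(i : ℤ) - 1) 1 =
      ∑ i ∈ Finset.range m, single (-(m : ℤ) + i) 1 ⊗ₜ single (-(i : ℤ) - 1) 1 +
        1 ⊗ₜ[k] (single (-(m + 1 : ℤ)) 1 : GA k) := by
    rw [Finset.mul_sum, Finset.sum_range_succ]
    simp only [single_one_tmul_one_mul_tmul]
    rw [one_def]
    push_cast
    congr 1
    · refine Finset.sum_congr rfl fun i _ => ?_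
      ring_nf
    · ring_nf
  -- `rw [mul_neg]` fails: the negation in `Dval` is the module negation of the tensor product,
  -- which agrees with the ring negation only up to unfolding.
  rw [← Nat.cast_succ, Dval_neg_natCast, Dval_neg_natCast,
    show ∀ x y : GA k ⊗[k] GA k, x * -y = -(x * y) from fun x y => mul_neg x y, key, Nat.cast_succ]
  abel

theorem Dval_add_one (n : ℤ) :
    Dval k (n + 1) = (single 1 1 ⊗ₜ 1) * Dval k n + 1 ⊗ₜ[k] (single n 1 : GA k) := by
  rcases n with m | m
  · exact Dval_natCast_add_one m
  · rw [Int.negSucc_eq, show -((m : ℤ) + 1) + 1 = -m by ring]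
    exact Dval_neg_natCast_add_one m

theorem Δ_single_one_mul (x : GA k) :
    Δ k (single 1 1 * x) = (single 1 1 ⊗ₜ 1) * Δ k x + 1 ⊗ₜ x := by
  induction x using AddMonoidAlgebra.induction_linear with
  | zero => simp only [mul_zero, map_zero, tmul_zero, add_zero]
  | add f g hf hg => rw [mul_add, map_add, map_add, hf, hg, tmul_add, mul_add]; abel
  | single n c =>
    rw [single_mul_single, one_mul, add_comm, Δ_single, Dval_add_one, Δ_single, smul_add,
      mul_smul_comm, ← tmul_smul, smul_single', mul_one]

theorem coassoc_apply_single (n : ℤ) :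
    TensorProduct.assoc k (GA k) (GA k) (GA k) (map (Δ k) LinearMap.id (Δ k (single n 1))) =
      map LinearMap.id (Δ k) (Δ k (single n 1)) := by
  have step :=
    coassoc_apply_mul_iff (D := Δ k) (isUnit_single_one (1 : ℤ)) Δ_single_one_mul Δ_one
  have shift (m : ℤ) : (single (m + 1) 1 : GA k) = single 1 1 * single m 1 := by
    rw [single_mul_single, one_mul, add_comm]
  induction n using Int.induction_on with
  | zero => rw [← one_def, Δ_one, map_zero, map_zero, map_zero]
  | succ n ih => rwa [shift, step]
  | pred n ih => rwa [← sub_add_cancel (-(n : ℤ)) 1, shift, step] at ih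

end

/-- `Δ` is coassociative: `(Δ ⊗ id) ∘ Δ = (id ⊗ Δ) ∘ Δ`. -/
theorem cyclicGroupAlgebra_coassoc :
    (TensorProduct.assoc k (GA k) (GA k) (GA k)).toLinearMap.comp
        ((TensorProduct.map (Δ k) LinearMap.id).comp (Δ k)) =
      (TensorProduct.map LinearMap.id (Δ k)).comp (Δ k) :=
  lhom_ext' fun n => LinearMap.ext_ring (coassoc_apply_single n)
end

section
/- Let K(F) be the space of finitely supported complex-valued functions on the infinite cyclic group F = ⟨a⟩, with basis {δ_n : n ∈ ℤ} where δ_n(a^m) = [m = n]. The bilinear product defined by δ_m ∗ δ_n = δ_{m+n+1} if m, n ≥ 0; δ_m ∗ δ_n = −δ_{m+n+1} if m, n < 0; and δ_m ∗ δ_n = 0 otherwise, is associative. -/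
set_option maxHeartbeats 2000000


/-- `K(F)`: finitely supported complex-valued functions on the infinite cyclic group,
with basis `δ_n = Finsupp.single n 1`, `n ∈ ℤ`. -/
abbrev KF := ℤ →₀ ℂ

/-- The product on basis elements: `δ_m ∗ δ_n = δ_{m+n+1}` if `m, n ≥ 0`,
`δ_m ∗ δ_n = −δ_{m+n+1}` if `m, n < 0`, and `0` otherwise. -/
noncomputable def starBasis (m n : ℤ) : KF :=
  if 0 ≤ m ∧ 0 ≤ n then Finsupp.single (m + n + 1) (1 : ℂ)
  else if m < 0 ∧ n < 0 then -Finsupp.single (m + n + 1) (1 : ℂ)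
  else 0

/-- The bilinear extension of `∗` to `K(F)`. -/
noncomputable def starMul (f g : KF) : KF :=
  f.sum fun m a => g.sum fun n b => (a * b) • starBasis m n

lemma starMul_single_single (m n : ℤ) (a b : ℂ) :
    starMul (Finsupp.single m a) (Finsupp.single n b) = (a * b) • starBasis m n := by
  unfold starMul
  rw [Finsupp.sum_single_index, Finsupp.sum_single_index] <;> simp

lemma starBasis_core (l m n : ℤ) :
    (if 0 ≤ l ∧ 0 ≤ m then starBasis (l + m + 1) n
      else if l < 0 ∧ m < 0 then -starBasis (l + m + 1) n else 0) =
    (if 0 ≤ m ∧ 0 ≤ n then starBasis l (m + n + 1)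
      else if m < 0 ∧ n < 0 then -starBasis l (m + n + 1) else 0) := by
  unfold starBasis
  split_ifs <;>
    first
      | rfl
      | omega
      | (congr 1; omega)
      | (congr 2; omega)
      | (congr 3; omega)
      | simp

/-- the product `∗` on `K(F)` is associative. -/
theorem KF_star_assoc (l m n : ℤ) :
    starMul (starMul (Finsupp.single l (1 : ℂ)) (Finsupp.single m (1 : ℂ)))
        (Finsupp.single n (1 : ℂ)) =
      starMul (Finsupp.single l (1 : ℂ))
        (starMul (Finsupp.single m (1 : ℂ)) (Finsupp.single n (1 : ℂ))) := by
  rw [starMul_single_single (m:=l)]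
  simp only [one_mul, one_smul]
  rw [starMul_single_single (m:=m) (n:=n)]
  simp only [one_mul, one_smul]
  have key : ∀ (p q : ℤ), starMul (starBasis p q) (Finsupp.single n 1)
      = if 0 ≤ p ∧ 0 ≤ q then starMul (Finsupp.single (p+q+1) 1) (Finsupp.single n 1)
        else if p < 0 ∧ q < 0 then -starMul (Finsupp.single (p+q+1) 1) (Finsupp.single n 1)
        else 0 := by
    intro p q
    unfold starBasis
    split_ifs
    · rfl
    · rw [← Finsupp.single_neg, starMul_single_single, starMul_single_single]
      simp [neg_smul]
    · simp [starMul, Finsupp.sum_zero_index]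
  have key2 : ∀ (p q : ℤ), starMul (Finsupp.single l 1) (starBasis p q)
      = if 0 ≤ p ∧ 0 ≤ q then starMul (Finsupp.single l 1) (Finsupp.single (p+q+1) 1)
        else if p < 0 ∧ q < 0 then -starMul (Finsupp.single l 1) (Finsupp.single (p+q+1) 1)
        else 0 := by
    intro p q
    unfold starBasis
    split_ifs
    · rfl
    · rw [← Finsupp.single_neg, starMul_single_single, starMul_single_single]
      simp [neg_smul]
    · simp [starMul, Finsupp.sum_zero_index]
  simp only [one_mul, one_smul, key, key2, starMul_single_single]
  exact starBasis_core l m n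
end

section
/- Let (A, μ, Δ) be an infinitesimal bialgebra (Δ a coassociative derivation into A⊗A) whose bibalanceator vanishes. Define δ_a(x) = (1⊗a)Δ(x) − τ((1⊗a)Δ(x)). Then for each a ∈ A, δ_a is a derivation of the commutator Lie algebra A^Lie with values in the A^Lie-module A⊗A: δ_a([x,y]) = x·δ_a(y) − y·δ_a(x) for all x, y ∈ A. -/
open scoped TensorProduct

variable {k : Type*} [Field k] {A : Type*} [Ring A] [Algebra k A]

/-- The flip `τ` of `A ⊗ A`. -/
noncomputable def flipT (k : Type*) [Field k] (A : Type*) [Ring A] [Algebra k A] :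
    A ⊗[k] A →ₗ[k] A ⊗[k] A :=
  (TensorProduct.comm k A A).toLinearMap

/-- The adjoint action of `A^Lie` on `A ⊗ A`: `x · (u ⊗ v) = [x,u] ⊗ v + u ⊗ [x,v]`. -/
noncomputable def lieAct (x : A) (t : A ⊗[k] A) : A ⊗[k] A :=
  (x ⊗ₜ[k] (1 : A)) * t - t * (x ⊗ₜ[k] (1 : A)) +
    ((1 : A) ⊗ₜ[k] x) * t - t * ((1 : A) ⊗ₜ[k] x)

/-- `δ_a(x) = (1 ⊗ a)Δ(x) − τ((1 ⊗ a)Δ(x))`. -/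
noncomputable def overCobracket (Δ : A →ₗ[k] A ⊗[k] A) (a x : A) : A ⊗[k] A :=
  ((1 : A) ⊗ₜ[k] a) * Δ x - flipT k A (((1 : A) ⊗ₜ[k] a) * Δ x)

/-- The component `B̄(a)(x ⊗ y)` of the bibalanceator. -/
noncomputable def overBal (Δ : A →ₗ[k] A ⊗[k] A) (a x y : A) : A ⊗[k] A :=
  ((x * a) ⊗ₜ[k] (1 : A)) * flipT k A (Δ y) -
    (a ⊗ₜ[k] (1 : A)) * flipT k A (Δ y) * ((1 : A) ⊗ₜ[k] x) +
    ((1 : A) ⊗ₜ[k] (y * a)) * Δ x -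
    ((1 : A) ⊗ₜ[k] a) * Δ x * (y ⊗ₜ[k] (1 : A))

lemma flipT_mul (s t : A ⊗[k] A) : flipT k A (s * t) = flipT k A s * flipT k A t := by
  have h : flipT k A = (Algebra.TensorProduct.comm k A A).toLinearMap := rfl
  rw [h]; simp

lemma flipT_tmul (u v : A) : flipT k A (u ⊗ₜ[k] v) = v ⊗ₜ[k] u := rfl

/-- if `(A, μ, Δ)` is an infinitesimal bialgebra whose bibalanceator
vanishes, then `δ_a` is a derivation of `A^Lie` with values in `A ⊗ A`. -/
theorem overCobracket_derivation_of_bibalanced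
    (Δ : A →ₗ[k] A ⊗[k] A)
    (hcoassoc :
      (TensorProduct.assoc k A A A).toLinearMap.comp
          ((TensorProduct.map Δ LinearMap.id).comp Δ) =
        (TensorProduct.map LinearMap.id Δ).comp Δ)
    (hder : ∀ x y : A,
      Δ (x * y) = (x ⊗ₜ[k] (1 : A)) * Δ y + Δ x * ((1 : A) ⊗ₜ[k] y))
    (hbal : ∀ a x y : A, overBal Δ a x y = 0)
    (a x y : A) :
    overCobracket Δ a (x * y - y * x) =
      lieAct x (overCobracket Δ a y) - lieAct y (overCobracket Δ a x) := by
  have key : overCobracket Δ a (x * y - y * x) -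
      (lieAct x (overCobracket Δ a y) - lieAct y (overCobracket Δ a x)) =
      overBal Δ a x y - overBal Δ a y x := by
    simp only [overCobracket, lieAct, overBal, map_sub, hder, map_add, flipT_mul,
      flipT_tmul, mul_add, add_mul, mul_sub, sub_mul,
      Algebra.TensorProduct.tmul_mul_tmul, one_mul, mul_one, ← mul_assoc]
    abel
  rw [hbal a x y, hbal a y x, sub_self] at key
  exact sub_eq_zero.mp key
end
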